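/- Let V be a finite-dimensional real vector space, F₁,...,F_n ∈ V spanning a subspace, and suppose for a vector y = Σ s_i F_i (s_i ∈ ℝ) and functionals D₁,...,D_n ∈ V* satisfying the partition relations (Σ_{i∈p} m_i F_i = F per group, D_j(F) = 0, D_j(F_i) ≥ 0 for i ≠ j with some strict positivity in each group, D_j(F_j) < 0, D_j(F_i) = 0 for i, j in different groups): if D_j(y) ≥ 0 for all j, then within each group p the coefficients satisfy s_i proportional to the multiplicities, i.e. y restricted to each group is a multiple of Σ_{i∈p} m_i F_i; hence y = s·F for some s ∈ ℝ when the F_i within each group are linearly independent apart from the single relation. -/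
import Mathlib


open Matrix

/-- Perron–Frobenius / graph-Laplacian type statement (dual half of the negativity
lemma): let `M` be a symmetric real `n × n` matrix, irreducible (the graph with an edge
`i ~ j` whenever `i ≠ j` and `M i j > 0` is connected), with nonnegative off-diagonal
entries, and let `m` be a positive vector with `M m = 0`.  Then any vector `s` with
`M s ≥ 0` componentwise is a real multiple of `m`. -/
theorem stmt_19 (n : ℕ) (M : Matrix (Fin n) (Fin n) ℝ)
    (hsymm : M.transpose = M)
    (hoffdiag : ∀ i j, i ≠ j → 0 ≤ M i j)
    (hirred : ∀ i j : Fin n,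
      Relation.ReflTransGen (fun a b : Fin n => a ≠ b ∧ 0 < M a b) i j)
    (m : Fin n → ℝ) (hm : ∀ i, 0 < m i) (hMm : M.mulVec m = 0)
    (s : Fin n → ℝ) (hMs : ∀ j, 0 ≤ M.mulVec s j) :
    ∃ c : ℝ, s = c • m := by
  rcases Nat.eq_zero_or_pos n with hn | hn
  · subst hn
    exact ⟨0, funext fun i => i.elim0⟩
  haveI : Nonempty (Fin n) := ⟨⟨0, hn⟩⟩
  -- M s = 0
  have hMs0 : ∀ j, M.mulVec s j = 0 := by
    have hsum : ∑ i, m i * M.mulVec s i = 0 := by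
      have : ∀ i, m i * M.mulVec s i = ∑ j, m i * (M i j * s j) := by
        intro i
        simp [Matrix.mulVec, dotProduct, Finset.mul_sum]
      rw [Finset.sum_congr rfl fun i _ => this i, Finset.sum_comm]
      have : ∀ j, ∑ i, m i * (M i j * s j) = M.mulVec m j * s j := by
        intro j
        rw [Matrix.mulVec, dotProduct, Finset.sum_mul]
        refine Finset.sum_congr rfl fun i _ => ?_
        have hMji : M j i = M i j := by
          conv_lhs => rw [← hsymm]
          rfl
        rw [hMji]; ring
      rw [Finset.sum_congr rfl fun j _ => this j]
      simp [hMm]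
    intro j
    have h0 : ∀ i ∈ Finset.univ, 0 ≤ m i * M.mulVec s i :=
      fun i _ => mul_nonneg (hm i).le (hMs i)
    have := (Finset.sum_eq_zero_iff_of_nonneg h0).mp hsum j (Finset.mem_univ j)
    have := mul_eq_zero.mp this
    rcases this with h | h
    · exact absurd h (hm j).ne'
    · exact h
  -- take the minimizer of s i / m i
  obtain ⟨i₀, -, hmin⟩ := Finset.exists_min_image Finset.univ
    (fun i => s i / m i) Finset.univ_nonempty
  set c : ℝ := s i₀ / m i₀ with hc
  set r : Fin n → ℝ := fun i => s i - c * m i with hr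
  have hrnn : ∀ i, 0 ≤ r i := by
    intro i
    have : c ≤ s i / m i := hmin i (Finset.mem_univ i)
    have := (div_le_div_iff₀ (hm i₀) (hm i)).mp (by simpa [hc] using this)
    have h2 : c * m i ≤ s i := by
      rw [hc, div_mul_eq_mul_div, div_le_iff₀ (hm i₀)]
      linarith [this]
    simp [hr]; linarith
  have hri₀ : r i₀ = 0 := by
    simp [hr, hc, div_mul_cancel₀ _ (hm i₀).ne']
  have hMr : ∀ j, M.mulVec r j = 0 := by
    intro j
    have : M.mulVec r = M.mulVec s - c • M.mulVec m := by
      rw [hr]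
      ext k
      simp [Matrix.mulVec, dotProduct, Finset.sum_sub_distrib, Finset.mul_sum,
        mul_sub, mul_left_comm, Finset.smul_sum]
    rw [this, hMm]
    simp [hMs0 j]
  -- propagation of r = 0 along the graph
  have step : ∀ a b : Fin n, r a = 0 → a ≠ b → 0 < M a b → r b = 0 := by
    intro a b hra hab hMab
    have hsum : ∑ j, M a j * r j = 0 := by
      have := hMr a
      simpa [Matrix.mulVec, dotProduct] using this
    have hnn : ∀ j ∈ Finset.univ, 0 ≤ M a j * r j := by
      intro j _
      by_cases hj : j = a
      · subst hj; simp [hra]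
      · exact mul_nonneg (hoffdiag a j (Ne.symm hj)) (hrnn j)
    have := (Finset.sum_eq_zero_iff_of_nonneg hnn).mp hsum b (Finset.mem_univ b)
    rcases mul_eq_zero.mp this with h | h
    · exact absurd h hMab.ne'
    · exact h
  have hr0 : ∀ j, r j = 0 := by
    intro j
    have h := hirred i₀ j
    induction h with
    | refl => exact hri₀
    | tail _ hbc ih => exact step _ _ ih hbc.1 hbc.2
  refine ⟨c, funext fun i => ?_⟩
  have := hr0 i
  simp only [hr] at this
  simp [Pi.smul_apply, smul_eq_mul]
  linarith
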